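/- arXiv:2304.14595 — 2 statements merged into one kernel-verified Lean document; each statement's English description precedes it below -/
import Mathlib

section
/- For m ≥ 2, a word w with nonzero first letter x = w[0], and k ≥ |w|: for all 0 ≤ r < m^k, a_{m;w}(x·m^k + r) = a_{m;w}(r) + 1 (mod m) if α_w·m^k ≤ r < β_w·m^k, and a_{m;w}(x·m^k + r) = a_{m;w}(r) otherwise, where α_w = (w')_m / m^{|w|-1}, β_w = ((w')_m + 1)/m^{|w|-1}, and w' is w with its first letter removed. -/
/-- Number of occurrences of the word `w` as a factor of the word `x`. -/
def occCount (w x : List ℕ) : ℕ :=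
  (List.range (x.length + 1)).countP (fun i => decide (w <+: x.drop i))

/-- Base-`m` expansion of `n`, most significant digit first, with `0` written as the digit `0`. -/
def baseExp (m n : ℕ) : List ℕ :=
  if n = 0 then [0] else (Nat.digits m n).reverse

/-- `e_{m;w}(n)`: number of occurrences of `w` in the base-`m` expansion of `n`. -/
def eCount (m : ℕ) (w : List ℕ) (n : ℕ) : ℕ := occCount w (baseExp m n)

/-- `a_{m;w}(n) = e_{m;w}(n) mod m`. -/
def aSeq (m : ℕ) (w : List ℕ) (n : ℕ) : ℕ := eCount m w n % m

/-- The value `(w)_m` of the digit string `w` in base `m`. -/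
def wordVal (m : ℕ) (w : List ℕ) : ℕ := w.foldl (fun acc d => acc * m + d) 0

/-- The finite word `v` is a prefix of the infinite sequence `s`. -/
def IsPrefixSeq (v : List ℕ) (s : ℕ → ℕ) : Prop := ∀ n < v.length, s n = v.getD n 0

/-
Write `x * m ^ k + r` in base `m` as `x` followed by the `k`-digit zero-padded expansion of `r`.
Since `w` begins with a nonzero letter, no occurrence of `w` starts in the padding zeros, so the
only occurrence not already counted in `r` is the one at the front, and it is there exactly when
`w'` is a prefix of the padded expansion, i.e. when the leading `|w'|` digits of `r` spell
`(w')_m`, i.e. when `(w')_m * m ^ (k - |w'|) ≤ r < ((w')_m + 1) * m ^ (k - |w'|)`.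
-/

theorem wordVal_eq_ofDigits_reverse (m : ℕ) (v : List ℕ) :
    wordVal m v = Nat.ofDigits m v.reverse := by
  induction v using List.reverseRecOn with
  | nil => rfl
  | append_singleton v d ih =>
    rw [wordVal, List.foldl_append, ← wordVal, ih]
    simp only [List.foldl_cons, List.foldl_nil, List.reverse_append, List.reverse_cons,
      List.reverse_nil, List.nil_append, List.cons_append, Nat.ofDigits_cons]
    ring

theorem wordVal_append (m : ℕ) (u v : List ℕ) :
    wordVal m (u ++ v) = wordVal m u * m ^ v.length + wordVal m v := by
  simp only [wordVal_eq_ofDigits_reverse, List.reverse_append, Nat.ofDigits_append,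
    List.length_reverse]
  ring

theorem wordVal_lt_pow_length {m : ℕ} (hm : 1 < m) {v : List ℕ} (hv : ∀ d ∈ v, d < m) :
    wordVal m v < m ^ v.length := by
  rw [wordVal_eq_ofDigits_reverse, ← List.length_reverse]
  exact Nat.ofDigits_lt_base_pow_length hm (by simpa using hv)

theorem wordVal_inj_of_length_eq {m : ℕ} (hm : 1 < m) {u v : List ℕ}
    (hlen : u.length = v.length) (hu : ∀ d ∈ u, d < m) (hv : ∀ d ∈ v, d < m)
    (h : wordVal m u = wordVal m v) : u = v := by
  rw [wordVal_eq_ofDigits_reverse, wordVal_eq_ofDigits_reverse] at h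
  exact List.reverse_injective <|
    Nat.ofDigits_inj_of_len_eq hm (by simpa using hlen) (by simpa using hu) (by simpa using hv) h

theorem wordVal_take {m : ℕ} (hm : 1 < m) {p : List ℕ} (hp : ∀ d ∈ p, d < m) (n : ℕ) :
    wordVal m (p.take n) = wordVal m p / m ^ (p.length - n) := by
  have hdrop : wordVal m (p.drop n) < m ^ (p.length - n) := by
    simpa using wordVal_lt_pow_length hm fun d hd => hp d (List.mem_of_mem_drop hd)
  have hsplit := wordVal_append m (p.take n) (p.drop n)
  rw [List.take_append_drop, List.length_drop] at hsplit
  rw [hsplit, add_comm, Nat.add_mul_div_right _ _ (by positivity), Nat.div_eq_of_lt hdrop,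
    zero_add]

theorem prefix_iff_wordVal_div_eq {m : ℕ} (hm : 1 < m) {t p : List ℕ} (ht : ∀ d ∈ t, d < m)
    (hp : ∀ d ∈ p, d < m) (hlen : t.length ≤ p.length) :
    t <+: p ↔ wordVal m p / m ^ (p.length - t.length) = wordVal m t := by
  rw [List.prefix_iff_eq_take, ← wordVal_take hm hp]
  refine ⟨fun h => by rw [← h], fun h => (wordVal_inj_of_length_eq hm ?_ ?_ ht h).symm⟩
  · simpa using hlen
  · exact fun d hd => hp d (List.mem_of_mem_take hd)

theorem digits_mul_pow_add {m : ℕ} (hm : 1 < m) {x k r : ℕ} (hx0 : 0 < x) (hxm : x < m)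
    (hr : r < m ^ k) :
    Nat.digits m (x * m ^ k + r) = Nat.digitsAppend m k r ++ [x] := by
  have hlen : (Nat.digits m r).length ≤ k := (Nat.digits_length_le_iff hm r).mpr hr
  rw [Nat.digitsAppend, ← Nat.digits_of_lt m x hx0.ne' hxm,
    Nat.digits_append_zeroes_append_digits hm hx0, Nat.add_sub_cancel' hlen]
  ring_nf

theorem baseExp_mul_pow_add {m : ℕ} (hm : 1 < m) {x k r : ℕ} (hx0 : 0 < x) (hxm : x < m)
    (hr : r < m ^ k) :
    baseExp m (x * m ^ k + r) = x :: (Nat.digitsAppend m k r).reverse := by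
  have hne : x * m ^ k + r ≠ 0 := by positivity
  rw [baseExp, if_neg hne, digits_mul_pow_add hm hx0 hxm hr]
  simp

theorem prefix_reverse_digitsAppend_iff {m : ℕ} (hm : 1 < m) {t : List ℕ} {k r : ℕ}
    (ht : ∀ d ∈ t, d < m) (htk : t.length ≤ k) (hr : r < m ^ k) :
    t <+: (Nat.digitsAppend m k r).reverse ↔
      wordVal m t * m ^ (k - t.length) ≤ r ∧ r < (wordVal m t + 1) * m ^ (k - t.length) := by
  have hval : wordVal m (Nat.digitsAppend m k r).reverse = r := by
    rw [wordVal_eq_ofDigits_reverse, List.reverse_reverse, Nat.digitsAppend,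
      Nat.ofDigits_append_replicate_zero, Nat.ofDigits_digits]
  have hlen := Nat.length_digitsAppend hm k hr
  have hpow : 0 < m ^ (k - t.length) := by positivity
  rw [prefix_iff_wordVal_div_eq hm ht (by simpa using Nat.lt_of_mem_digitsAppend hm k)
    (by simpa [hlen] using htk), List.length_reverse, hlen, hval,
    Nat.div_eq_iff hpow, add_one_mul]
  omega

theorem occCount_cons (w : List ℕ) (a : ℕ) (s : List ℕ) :
    occCount w (a :: s) = (if w <+: a :: s then 1 else 0) + occCount w s := by
  rw [occCount, List.length_cons, List.range_succ_eq_map, List.countP_cons, List.countP_map]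
  simp only [occCount, Function.comp_def, List.drop_succ_cons, List.drop_zero]
  split_ifs <;> simp_all [add_comm]

theorem occCount_replicate_zero_append {w : List ℕ} (hw : w.headI ≠ 0) (j : ℕ) (s : List ℕ) :
    occCount w (List.replicate j 0 ++ s) = occCount w s := by
  induction j with
  | zero => simp
  | succ j ih =>
    have hpre : ¬ w <+: 0 :: (List.replicate j 0 ++ s) := by
      cases w <;> simp_all
    rw [List.replicate_succ, List.cons_append, occCount_cons, if_neg hpre, ih, zero_add]

theorem eCount_eq_occCount_reverse_digits (m : ℕ) {w : List ℕ} (hw : w.headI ≠ 0) (n : ℕ) :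
    eCount m w n = occCount w (Nat.digits m n).reverse := by
  rw [eCount, baseExp]
  split_ifs with hn
  · simpa [hn] using occCount_replicate_zero_append hw 1 []
  · rfl

theorem occCount_reverse_digitsAppend {m : ℕ} {w : List ℕ} (hw : w.headI ≠ 0) (k n : ℕ) :
    occCount w (Nat.digitsAppend m k n).reverse = eCount m w n := by
  rw [Nat.digitsAppend, List.reverse_append, List.reverse_replicate,
    occCount_replicate_zero_append hw, eCount_eq_occCount_reverse_digits m hw]

theorem eCount_mul_pow_add {m x k r : ℕ} (t : List ℕ) (hm : 1 < m) (hx0 : 0 < x) (hxm : x < m)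
    (hr : r < m ^ k) :
    eCount m (x :: t) (x * m ^ k + r) =
      (if t <+: (Nat.digitsAppend m k r).reverse then 1 else 0) + eCount m (x :: t) r := by
  rw [eCount, baseExp_mul_pow_add hm hx0 hxm hr, occCount_cons,
    occCount_reverse_digitsAppend (by simpa using hx0.ne')]
  simp only [List.cons_prefix_cons, true_and]

theorem stmt3 (m k : ℕ) (w : List ℕ) (hm : 2 ≤ m)
    (hw : ∀ d ∈ w, d < m) (hhead : w.headI ≠ 0) (hk : w.length ≤ k) :
    ∀ r < m ^ k,
      aSeq m w (w.headI * m ^ k + r) =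
        if wordVal m w.tail * m ^ (k - (w.length - 1)) ≤ r ∧
            r < (wordVal m w.tail + 1) * m ^ (k - (w.length - 1)) then
          (aSeq m w r + 1) % m
        else aSeq m w r := by
  intro r hr
  obtain _ | ⟨x, t⟩ := w
  · exact absurd rfl hhead
  simp only [List.headI_cons, List.tail_cons, List.length_cons, Nat.add_sub_cancel] at hhead hk ⊢
  have hxm : x < m := hw x List.mem_cons_self
  have ht : ∀ d ∈ t, d < m := fun d hd => hw d (List.mem_cons_of_mem x hd)
  rw [aSeq, aSeq, eCount_mul_pow_add t hm (Nat.pos_of_ne_zero hhead) hxm hr,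
    if_congr (prefix_reverse_digitsAppend_iff hm ht (by omega) hr) rfl rfl]
  split_ifs
  · rw [Nat.mod_add_mod, Nat.add_comm]
  · rw [zero_add]
end

section
/- For m ≥ 2, a word w with first letter 0, a nonzero digit y, and any integer r with (w)_m < m^k ≤ r < m^{k+1}: e_{m;w}(r + y·m^{k+1}) = e_{m;w}(r). -/
lemma occCount_cons_s4 (w : List ℕ) (a : ℕ) (L : List ℕ) (h : ¬ w <+: (a :: L)) :
    occCount w (a :: L) = occCount w L := by
  unfold occCount
  rw [List.length_cons, List.range_succ_eq_map, List.countP_cons, List.countP_map]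
  rw [if_neg (by simpa using h), add_zero]
  apply List.countP_congr
  intro i _
  simp [Function.comp]

theorem stmt4 (m y k r : ℕ) (w : List ℕ) (hm : 2 ≤ m)
    (hw : ∀ d ∈ w, d < m) (hne : w ≠ []) (hhead : w.headI = 0)
    (hy : 1 ≤ y) (hy' : y < m)
    (h1 : wordVal m w < m ^ k) (h2 : m ^ k ≤ r) (h3 : r < m ^ (k + 1)) :
    eCount m w (r + y * m ^ (k + 1)) = eCount m w r := by
  have hb : 1 < m := hm
  have hpk : 0 < m ^ k := pow_pos (by omega) k
  have hr0 : r ≠ 0 := by omega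
  have hlen : (Nat.digits m r).length = k + 1 := by
    rw [Nat.digits_len m r hb hr0, Nat.log_eq_of_pow_le_of_lt_pow h2 h3]
  have hdy : Nat.digits m y = [y] := by
    rw [Nat.digits_def' hb (by omega), Nat.mod_eq_of_lt hy', Nat.div_eq_of_lt hy',
      Nat.digits_zero]
  have hd : Nat.digits m (r + y * m ^ (k + 1)) = Nat.digits m r ++ [y] := by
    rw [← hdy, Nat.digits_append_digits (by omega : 0 < m), hlen]; ring_nf
  have hne2 : r + y * m ^ (k + 1) ≠ 0 := by positivity
  rw [eCount, eCount, baseExp, baseExp, if_neg hr0, if_neg hne2, hd, List.reverse_append,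
    List.reverse_singleton, List.singleton_append]
  apply occCount_cons_s4
  intro hp
  obtain ⟨h, t, rfl⟩ : ∃ h t, w = h :: t := by
    cases w with
    | nil => exact absurd rfl hne
    | cons h t => exact ⟨h, t, rfl⟩
  simp only [List.headI] at hhead
  subst hhead
  obtain ⟨s, hs⟩ := hp
  simp only [List.cons_append] at hs
  have : (0 : ℕ) = y := (List.cons.injEq _ _ _ _ ▸ hs).1
  omega
end
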